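/- Let s₁, …, s_m be an alternating sequence and suppose the rainflow removal step (deleting s_i, s_{i+1} when |s_{i−1}−s_i| ≥ |s_i−s_{i+1}| ≤ |s_{i+1}−s_{i+2}|) is applied repeatedly until no longer possible. Then the maximum and the minimum values of the sequence are never deleted; in particular the residue contains both the global maximum and the global minimum of the original sequence, and the largest half cycle in the residue has depth equal to (max_i s_i) − (min_i s_i). -/
import Mathlib


/-- The sequence alternates: consecutive increments have opposite signs. -/
def Alternating : List ℝ → Prop
  | a :: b :: c :: t => (b - a) * (c - b) < 0 ∧ Alternating (b :: c :: t)
  | _ => True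

/-- One rainflow removal step: delete two adjacent interior extrema `b, c` with
`|a − b| ≥ |b − c| ≤ |c − d|`, recording a full cycle of depth `|b − c|`. -/
inductive RainflowStep : List ℝ → ℝ → List ℝ → Prop
  | mk (p : List ℝ) (a b c d : ℝ) (t : List ℝ)
      (h₁ : |b - c| ≤ |a - b|) (h₂ : |b - c| ≤ |c - d|) :
      RainflowStep (p ++ a :: b :: c :: d :: t) |b - c| (p ++ a :: d :: t)

/-- A run of the rainflow algorithm extracting a list of full-cycle depths. -/
inductive RainflowRun : List ℝ → List ℝ → List ℝ → Prop
  | refl (s : List ℝ) : RainflowRun s [] s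
  | step {s s' r : List ℝ} {u : ℝ} {us : List ℝ} :
      RainflowStep s u s' → RainflowRun s' us r → RainflowRun s (u :: us) r

/-- Largest depth of a half cycle (adjacent-pair distance) in a profile. -/
def maxDepth : List ℝ → ℝ
  | a :: b :: t => max |b - a| (maxDepth (b :: t))
  | _ => 0

lemma alt_tail {x : ℝ} {l : List ℝ} (h : Alternating (x :: l)) : Alternating l := by
  match l with
  | [] => trivial
  | [a] => trivial
  | a :: b :: t => exact h.2

lemma alt_suffix : ∀ (p l : List ℝ), Alternating (p ++ l) → Alternating l := by
  intro p
  induction p with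
  | nil => intro l h; exact h
  | cons x p ih => intro l h; exact ih l (alt_tail h)

lemma sign_transfer {u v w : ℝ} (h1 : 0 < u * v) (h2 : v * w < 0) : u * w < 0 := by
  rcases lt_trichotomy v 0 with h | h | h
  · have hu : u < 0 := by nlinarith
    have hw : 0 < w := by nlinarith
    nlinarith
  · rw [h] at h1; simp at h1
  · have hu : 0 < u := by nlinarith
    have hw : w < 0 := by nlinarith
    nlinarith

lemma core_bounds {a b c d : ℝ} (h0 : (b - a) * (c - b) < 0) (h0' : (c - b) * (d - c) < 0)
    (h₁ : |b - c| ≤ |a - b|) (h₂ : |b - c| ≤ |c - d|) :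
    0 < (d - a) * (b - a) ∧ 0 < (d - a) * (d - c) ∧
    min a d ≤ b ∧ b ≤ max a d ∧ min a d ≤ c ∧ c ≤ max a d := by
  rcases lt_trichotomy a b with h | h | h
  · have hcb : c < b := by nlinarith
    have hdc : c < d := by nlinarith
    rw [abs_of_pos (by linarith : (0:ℝ) < b - c), abs_of_neg (by linarith : a - b < 0)] at h₁
    rw [abs_of_pos (by linarith : (0:ℝ) < b - c), abs_of_neg (by linarith : c - d < 0)] at h₂
    have hac : a ≤ c := by linarith
    have hbd : b ≤ d := by linarith
    refine ⟨by nlinarith, by nlinarith, ?_, ?_, ?_, ?_⟩ <;>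
      simp only [min_def, max_def] <;> split_ifs <;> linarith
  · exfalso; rw [← h] at h0; simp at h0
  · have hcb : b < c := by nlinarith
    have hdc : d < c := by nlinarith
    rw [abs_of_neg (by linarith : b - c < 0), abs_of_pos (by linarith : (0:ℝ) < a - b)] at h₁
    rw [abs_of_neg (by linarith : b - c < 0), abs_of_pos (by linarith : (0:ℝ) < c - d)] at h₂
    have hac : c ≤ a := by linarith
    have hbd : d ≤ b := by linarith
    refine ⟨by nlinarith, by nlinarith, ?_, ?_, ?_, ?_⟩ <;>
      simp only [min_def, max_def] <;> split_ifs <;> linarith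

lemma max4 {α : Type*} [LinearOrder α] {x y z w t : α}
    (hy : y ≤ max x w) (hz : z ≤ max x w) :
    max x (max y (max z (max w t))) = max x (max w t) := by
  apply le_antisymm
  · have hxw : max x w ≤ max x (max w t) := max_le_max le_rfl (le_max_left _ _)
    exact max_le (le_max_left _ _)
      (max_le (hy.trans hxw) (max_le (hz.trans hxw) (le_max_right _ _)))
  · exact max_le_max le_rfl ((le_max_right _ _).trans (le_max_right _ _))

lemma min4 {α : Type*} [LinearOrder α] {x y z w t : α}
    (hy : min x w ≤ y) (hz : min x w ≤ z) :
    min x (min y (min z (min w t))) = min x (min w t) := by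
  apply le_antisymm
  · exact min_le_min le_rfl ((min_le_right _ _).trans (min_le_right _ _))
  · have hxw : min x (min w t) ≤ min x w := min_le_min le_rfl (min_le_left _ _)
    exact le_min (min_le_left _ _)
      (le_min (hxw.trans hy) (le_min (hxw.trans hz) (min_le_right _ _)))

lemma base_max (a b c d : ℝ) (t : List ℝ) (hb : b ≤ max a d) (hc : c ≤ max a d) :
    (a :: d :: t).maximum = (a :: b :: c :: d :: t).maximum := by
  simp only [List.maximum_cons]
  refine (max4 ?_ ?_).symm
  · rw [← WithBot.coe_max]; exact_mod_cast hb
  · rw [← WithBot.coe_max]; exact_mod_cast hc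

lemma base_min (a b c d : ℝ) (t : List ℝ) (hb : min a d ≤ b) (hc : min a d ≤ c) :
    (a :: d :: t).minimum = (a :: b :: c :: d :: t).minimum := by
  simp only [List.minimum_cons]
  refine (min4 ?_ ?_).symm
  · rw [← WithTop.coe_min]; exact_mod_cast hb
  · rw [← WithTop.coe_min]; exact_mod_cast hc

lemma base_alt (a b c d : ℝ) (t : List ℝ) (h : Alternating (a :: b :: c :: d :: t))
    (hda : 0 < (d - a) * (d - c)) : Alternating (a :: d :: t) := by
  match t with
  | [] => trivial
  | t₀ :: t' => exact ⟨sign_transfer hda h.2.2.1, h.2.2.2⟩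

lemma step_pres : ∀ (p : List ℝ) (a b c d : ℝ) (t : List ℝ),
    Alternating (p ++ a :: b :: c :: d :: t) → |b - c| ≤ |a - b| → |b - c| ≤ |c - d| →
    Alternating (p ++ a :: d :: t) ∧
    (p ++ a :: d :: t).maximum = (p ++ a :: b :: c :: d :: t).maximum ∧
    (p ++ a :: d :: t).minimum = (p ++ a :: b :: c :: d :: t).minimum := by
  intro p
  induction p with
  | nil =>
    intro a b c d t h h₁ h₂
    obtain ⟨s1, s2, hb1, hb2, hc1, hc2⟩ := core_bounds h.1 h.2.1 h₁ h₂
    exact ⟨base_alt a b c d t h s2, base_max a b c d t hb2 hc2, base_min a b c d t hb1 hc1⟩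
  | cons x p ih =>
    intro a b c d t h h₁ h₂
    have htl : Alternating (p ++ a :: b :: c :: d :: t) := alt_tail h
    obtain ⟨ihA, ihM, ihm⟩ := ih a b c d t htl h₁ h₂
    refine ⟨?_, ?_, ?_⟩
    · cases p with
      | nil =>
        obtain ⟨s1, _, _, _, _, _⟩ := core_bounds htl.1 htl.2.1 h₁ h₂
        have h2 : (b - a) * (a - x) < 0 := by
          have := h.1; nlinarith [h.1]
        have := sign_transfer s1 h2
        exact ⟨by nlinarith [this], ihA⟩
      | cons y p' =>
        cases p' with
        | nil => exact ⟨h.1, ihA⟩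
        | cons z p'' => exact ⟨h.1, ihA⟩
    · rw [List.cons_append, List.cons_append, List.maximum_cons, List.maximum_cons, ihM]
    · rw [List.cons_append, List.cons_append, List.minimum_cons, List.minimum_cons, ihm]

def NoStep : List ℝ → Prop
  | a :: b :: c :: d :: t =>
      ¬(|b - c| ≤ |a - b| ∧ |b - c| ≤ |c - d|) ∧ NoStep (b :: c :: d :: t)
  | _ => True

lemma noStep_tail {a : ℝ} {l : List ℝ} (h : NoStep (a :: l)) : NoStep l := by
  match l with
  | [] => trivial
  | [_] => trivial
  | [_, _] => trivial
  | _ :: _ :: _ :: _ => exact h.2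

lemma step_or_noStep : ∀ r : List ℝ, (∃ u r', RainflowStep r u r') ∨ NoStep r := by
  intro r
  induction r with
  | nil => right; trivial
  | cons a l ih =>
    rcases ih with ⟨u, l', hstep⟩ | hns
    · left
      cases hstep with
      | mk p x b c d t h₁ h₂ => exact ⟨_, _, RainflowStep.mk (a :: p) x b c d t h₁ h₂⟩
    · match l, hns with
      | [], _ => right; trivial
      | [b], _ => right; trivial
      | [b, c], _ => right; trivial
      | b :: c :: d :: t, hns =>
        by_cases hc : |b - c| ≤ |a - b| ∧ |b - c| ≤ |c - d|
        · left; exact ⟨_, _, RainflowStep.mk [] a b c d t hc.1 hc.2⟩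
        · right; exact ⟨hc, hns⟩

def Shrinking : List ℝ → Prop
  | a :: b :: c :: t => |c - b| ≤ |b - a| ∧ Shrinking (b :: c :: t)
  | _ => True

lemma shrink_of_noStep : ∀ (t : List ℝ) (a b c : ℝ), NoStep (a :: b :: c :: t) →
    |c - b| ≤ |b - a| → Shrinking (a :: b :: c :: t) := by
  intro t
  induction t with
  | nil => intro a b c _ h; exact ⟨h, trivial⟩
  | cons d t' ih =>
    intro a b c hns h
    have hP : |b - c| ≤ |a - b| := by rwa [abs_sub_comm b c, abs_sub_comm a b]
    have hQ : ¬ |b - c| ≤ |c - d| := fun q => hns.1 ⟨hP, q⟩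
    have hcd : |d - c| ≤ |c - b| := by
      rw [abs_sub_comm d c, abs_sub_comm c b]; linarith [not_le.mp hQ]
    exact ⟨h, ih b c d (noStep_tail hns) hcd⟩

lemma shrink_bounds : ∀ (t : List ℝ) (a b : ℝ), Alternating (a :: b :: t) →
    Shrinking (a :: b :: t) → ∀ x ∈ a :: b :: t, min a b ≤ x ∧ x ≤ max a b := by
  intro t
  induction t with
  | nil =>
    intro a b _ _ x hx
    simp only [List.mem_cons, List.mem_singleton, List.not_mem_nil, or_false] at hx
    rcases hx with rfl | rfl
    · exact ⟨min_le_left _ _, le_max_left _ _⟩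
    · exact ⟨min_le_right _ _, le_max_right _ _⟩
  | cons c t' ih =>
    intro a b halt hs
    have hd := hs.1
    have key : min a b ≤ min b c ∧ max b c ≤ max a b := by
      rcases lt_trichotomy a b with h | h | h
      · have hcb : c < b := by nlinarith [halt.1]
        rw [abs_of_neg (by linarith : c - b < 0), abs_of_pos (by linarith : (0:ℝ) < b - a)] at hd
        constructor <;> simp only [min_def, max_def] <;> split_ifs <;> linarith
      · exfalso; rw [h] at halt; have := halt.1; simp at this
      · have hcb : b < c := by nlinarith [halt.1]
        rw [abs_of_pos (by linarith : (0:ℝ) < c - b), abs_of_neg (by linarith : b - a < 0)] at hd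
        constructor <;> simp only [min_def, max_def] <;> split_ifs <;> linarith
    intro x hx
    rcases List.mem_cons.mp hx with rfl | hx
    · exact ⟨min_le_left _ _, le_max_left _ _⟩
    · obtain ⟨h1, h2⟩ := ih b c halt.2 hs.2 x hx
      exact ⟨key.1.trans h1, h2.trans key.2⟩

lemma shrink_maxDepth : ∀ (t : List ℝ) (a b : ℝ), Shrinking (a :: b :: t) →
    maxDepth (a :: b :: t) = |b - a| := by
  intro t
  induction t with
  | nil =>
    intro a b _
    simp [maxDepth, abs_nonneg]
  | cons c t' ih =>
    intro a b hs
    show max |b - a| (maxDepth (b :: c :: t')) = |b - a|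
    rw [ih b c hs.2]
    exact max_eq_left hs.1

lemma terminal_maxDepth : ∀ r : List ℝ, Alternating r → NoStep r →
    ∀ M mn : ℝ, r.maximum = (M : WithBot ℝ) → r.minimum = (mn : WithTop ℝ) →
    maxDepth r = M - mn := by
  intro r
  induction r with
  | nil => intro _ _ M mn hM _; simp at hM
  | cons a l ih =>
    intro halt hns M mn hM hmn
    match l, halt, hns, ih with
    | [], _, _, _ =>
      have hM' : a = M := by
        have : ((a : ℝ) : WithBot ℝ) = ↑M := by simpa [List.maximum_cons] using hM
        exact_mod_cast this
      have hmn' : a = mn := by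
        have : ((a : ℝ) : WithTop ℝ) = ↑mn := by simpa [List.minimum_cons] using hmn
        exact_mod_cast this
      show (0:ℝ) = M - mn
      rw [← hM', ← hmn']; ring
    | [b], halt, hns, _ =>
      have hM' : max a b = M := by
        have : ((max a b : ℝ) : WithBot ℝ) = ↑M := by
          rw [WithBot.coe_max]; simpa [List.maximum_cons] using hM
        exact_mod_cast this
      have hmn' : min a b = mn := by
        have : ((min a b : ℝ) : WithTop ℝ) = ↑mn := by
          rw [WithTop.coe_min]; simpa [List.minimum_cons] using hmn
        exact_mod_cast this
      have : maxDepth [a, b] = |b - a| := by simp [maxDepth, abs_nonneg]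
      rw [this, ← hM', ← hmn', max_sub_min_eq_abs]
    | b :: c :: t, halt, hns, ih =>
      by_cases hd : |c - b| ≤ |b - a|
      · have hs := shrink_of_noStep t a b c hns hd
        have hb := shrink_bounds (c :: t) a b halt hs
        have hMax : (a :: b :: c :: t).maximum = ((max a b : ℝ) : WithBot ℝ) := by
          apply le_antisymm
          · exact List.maximum_le_of_forall_le fun x hx => WithBot.coe_le_coe.mpr (hb x hx).2
          · rcases max_cases a b with ⟨he, _⟩ | ⟨he, _⟩ <;> rw [he]
            · exact List.le_maximum_of_mem' (by simp)
            · exact List.le_maximum_of_mem' (by simp)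
        have hMin : (a :: b :: c :: t).minimum = ((min a b : ℝ) : WithTop ℝ) := by
          apply le_antisymm
          · rcases min_cases a b with ⟨he, _⟩ | ⟨he, _⟩ <;> rw [he]
            · exact List.minimum_le_of_mem' (by simp)
            · exact List.minimum_le_of_mem' (by simp)
          · exact List.le_minimum_of_forall_le fun x hx => WithTop.coe_le_coe.mpr (hb x hx).1
        have hM' : max a b = M := by rw [hM] at hMax; exact_mod_cast hMax.symm
        have hmn' : min a b = mn := by rw [hmn] at hMin; exact_mod_cast hMin.symm
        rw [shrink_maxDepth (c :: t) a b hs, ← hM', ← hmn', max_sub_min_eq_abs]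
      · have h1 : (b - a) * (c - b) < 0 := halt.1
        have habs := not_le.mp hd
        have hfacts : (a ≤ b ∧ c ≤ a) ∨ (b ≤ a ∧ a ≤ c) := by
          rcases lt_trichotomy a b with h | h | h
          · left
            have hcb : c < b := by nlinarith
            rw [abs_of_pos (show (0:ℝ) < b - a by linarith),
              abs_of_neg (show c - b < 0 by linarith)] at habs
            exact ⟨le_of_lt h, by linarith⟩
          · exfalso; rw [h] at h1; simp at h1
          · right
            have hcb : b < c := by nlinarith
            rw [abs_of_neg (show b - a < 0 by linarith),
              abs_of_pos (show (0:ℝ) < c - b by linarith)] at habs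
            exact ⟨le_of_lt h, by linarith⟩
        have hup : (a : WithBot ℝ) ≤ (b :: c :: t).maximum := by
          rcases hfacts with ⟨h', _⟩ | ⟨_, h'⟩
          · exact le_trans (WithBot.coe_le_coe.mpr h') (List.le_maximum_of_mem' (by simp))
          · exact le_trans (WithBot.coe_le_coe.mpr h') (List.le_maximum_of_mem' (by simp))
        have hdn : (b :: c :: t).minimum ≤ (a : WithTop ℝ) := by
          rcases hfacts with ⟨_, h'⟩ | ⟨h', _⟩
          · exact le_trans (List.minimum_le_of_mem' (by simp)) (WithTop.coe_le_coe.mpr h')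
          · exact le_trans (List.minimum_le_of_mem' (by simp)) (WithTop.coe_le_coe.mpr h')
        have hM2 : (b :: c :: t).maximum = (M : WithBot ℝ) := by
          rw [List.maximum_cons, max_eq_right hup] at hM; exact hM
        have hmn2 : (b :: c :: t).minimum = (mn : WithTop ℝ) := by
          rw [List.minimum_cons, min_eq_right hdn] at hmn; exact hmn
        have htail := ih halt.2 (noStep_tail hns) M mn hM2 hmn2
        have hDD : |b - a| ≤ maxDepth (b :: c :: t) :=
          le_trans (le_of_lt habs) (le_max_left |c - b| (maxDepth (c :: t)))
        show max |b - a| (maxDepth (b :: c :: t)) = M - mn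
        rw [max_eq_right hDD, htail]

lemma run_pres : ∀ {s us r : List ℝ}, RainflowRun s us r → Alternating s →
    Alternating r ∧ r.maximum = s.maximum ∧ r.minimum = s.minimum := by
  intro s us r hrun
  induction hrun with
  | refl s => intro h; exact ⟨h, rfl, rfl⟩
  | step hstep _ ih =>
    intro h
    cases hstep with
    | mk p a b c d t h₁ h₂ =>
      obtain ⟨hA, hM, hm⟩ := step_pres p a b c d t h h₁ h₂
      obtain ⟨rA, rM, rm⟩ := ih hA
      exact ⟨rA, rM.trans hM, rm.trans hm⟩

/-- rainflow removal never deletes the global maximum or minimum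
value: the residue of a complete run (no further step possible) attains the same
maximum and minimum as the original profile, and its largest half cycle has
depth `max − min`. -/
theorem stmt9
    (s r : List ℝ) (us : List ℝ)
    (halt : Alternating s)
    (hrun : RainflowRun s us r)
    (hterm : ¬ ∃ (u : ℝ) (r' : List ℝ), RainflowStep r u r') :
    r.maximum = s.maximum ∧ r.minimum = s.minimum ∧
    ∀ M mn : ℝ, s.maximum = (M : WithBot ℝ) → s.minimum = (mn : WithTop ℝ) →
      maxDepth r = M - mn := by
  obtain ⟨rA, rM, rm⟩ := run_pres hrun halt
  refine ⟨rM, rm, ?_⟩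
  intro M mn hM hmn
  have hns : NoStep r := (step_or_noStep r).resolve_left (by
    rintro ⟨u, r', h⟩; exact hterm ⟨u, r', h⟩)
  exact terminal_maxDepth r rA hns M mn (rM.trans hM) (rm.trans hmn)
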